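/- arXiv:2201.05783 — 2 statements merged into one kernel-verified Lean document; each statement's English description precedes it below -/
import Mathlib

section
/- Let (T,χ) be a lenient tree decomposition of a graph G and let K be a set of vertices inducing a clique in G. Then there exist two adjacent nodes t,t′ of T (or a single node) such that K ⊆ χ(t) ∪ χ(t′). -/
open SimpleGraph

section Defs

variable {V W : Type}

/-- `X` covers the family `B`: every member of `B` meets `X`. -/
def Covers (X : Set V) (B : Set (Set V)) : Prop := ∀ S ∈ B, (S ∩ X).Nonempty

/-- A strict bramble: a family of connected vertex sets, pairwise intersecting. -/
def IsStrictBramble (G : SimpleGraph V) (B : Set (Set V)) : Prop :=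
  (∀ S ∈ B, (G.induce S).Connected) ∧ ∀ S ∈ B, ∀ S' ∈ B, (S ∩ S').Nonempty

/-- Two vertex sets touch: they intersect or are joined by an edge. -/
def Touches (G : SimpleGraph V) (S S' : Set V) : Prop :=
  (S ∩ S').Nonempty ∨ ∃ u ∈ S, ∃ v ∈ S', G.Adj u v

/-- A bramble: a family of connected vertex sets, pairwise touching. -/
def IsBramble (G : SimpleGraph V) (B : Set (Set V)) : Prop :=
  (∀ S ∈ B, (G.induce S).Connected) ∧ ∀ S ∈ B, ∀ S' ∈ B, Touches G S S'

/-- The order of a family of vertex sets: minimum size of a covering set. -/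
noncomputable def brOrder (B : Set (Set V)) : ℕ :=
  sInf {n | ∃ X : Set V, Covers X B ∧ X.ncard = n}

/-- The strict bramble number. -/
noncomputable def sbn (G : SimpleGraph V) : ℕ :=
  sSup {n | ∃ B, IsStrictBramble G B ∧ brOrder B = n}

/-- The bramble number. -/
noncomputable def bn (G : SimpleGraph V) : ℕ :=
  sSup {n | ∃ B, IsBramble G B ∧ brOrder B = n}

/-- `S` is an `(x,y)`-separator: `x, y ∉ S` and `x, y` lie in different
components of `G − S`. -/
def SepPair (G : SimpleGraph V) (x y : V) (S : Set V) : Prop :=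
  x ∉ S ∧ y ∉ S ∧ ∀ (hx : x ∈ Sᶜ) (hy : y ∈ Sᶜ),
    ¬ (G.induce Sᶜ).Reachable ⟨x, hx⟩ ⟨y, hy⟩

/-- `S` is an `(X,Y)`-separator of `G`. -/
def IsSetSeparator (G : SimpleGraph V) (X Y S : Set V) : Prop :=
  ∀ x ∈ X \ S, ∀ y ∈ Y \ S, SepPair G x y S

/-- A lenient tree decomposition of `G`. -/
structure LenientTD (G : SimpleGraph V) where
  ι : Type
  T : SimpleGraph ι
  tree : T.IsTree
  χ : ι → Set V
  covers : ∀ v : V, ∃ t, v ∈ χ t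
  edge_mem : ∀ u v : V, G.Adj u v →
    ∃ t t', (t = t' ∨ T.Adj t t') ∧ u ∈ χ t ∪ χ t' ∧ v ∈ χ t ∪ χ t'
  trace_conn : ∀ v : V, (T.induce {t | v ∈ χ t}).Connected

/-- The width of a lenient tree decomposition is at most `k`. -/
def LenientTD.WidthLE {G : SimpleGraph V} (D : LenientTD G) (k : ℕ) : Prop :=
  ∀ t, (D.χ t).ncard ≤ k

/-- An ordinary tree decomposition of `G`. -/
structure TreeDecomp (G : SimpleGraph V) where
  ι : Type
  T : SimpleGraph ι
  tree : T.IsTree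
  χ : ι → Set V
  covers : ∀ v : V, ∃ t, v ∈ χ t
  edge_mem : ∀ u v : V, G.Adj u v → ∃ t, u ∈ χ t ∧ v ∈ χ t
  trace_conn : ∀ v : V, (T.induce {t | v ∈ χ t}).Connected

/-- Treewidth: minimum over tree decompositions of (max bag size − 1). -/
noncomputable def tw (G : SimpleGraph V) : ℕ :=
  sInf {k | ∃ D : TreeDecomp G, ∀ t, (D.χ t).ncard ≤ k + 1}

/-- A minor model of `H` in `G`. -/
def IsMinorModel (H : SimpleGraph W) (G : SimpleGraph V) (μ : W → Set V) : Prop :=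
  (∀ w, (G.induce (μ w)).Connected) ∧
  (∀ w w', w ≠ w' → μ w ∩ μ w' = ∅) ∧
  (∀ w w', H.Adj w w' → ∃ u ∈ μ w, ∃ v ∈ μ w', G.Adj u v)

/-- `H` is a minor of `G`. -/
def IsMinorOf (H : SimpleGraph W) (G : SimpleGraph V) : Prop :=
  ∃ μ : W → Set V, IsMinorModel H G μ

/-- The lexicographic product `T · K_k`. -/
def lexK {ι : Type} (T : SimpleGraph ι) (k : ℕ) : SimpleGraph (ι × Fin k) where
  Adj a b := T.Adj a.1 b.1 ∨ (a.1 = b.1 ∧ a.2 ≠ b.2)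
  symm := ⟨by
    rintro a b (h | ⟨h1, h2⟩)
    · exact Or.inl h.symm
    · exact Or.inr ⟨h1.symm, h2.symm⟩⟩
  loopless := ⟨by
    rintro a (h | ⟨_, h2⟩)
    · exact T.irrefl h
    · exact h2 rfl⟩

/-- The lexicographic tree product number. -/
noncomputable def ltp (G : SimpleGraph V) : ℕ :=
  sInf {m | ∃ (ι : Type) (T : SimpleGraph ι), T.IsTree ∧ IsMinorOf G (lexK T m)}

/-- The `(T,χ)`-completion of `G`: make each union of two close bags a clique. -/
def LenientTD.completion {G : SimpleGraph V} (D : LenientTD G) : SimpleGraph V where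
  Adj u v := u ≠ v ∧ ∃ t t', (t = t' ∨ D.T.Adj t t') ∧
    u ∈ D.χ t ∪ D.χ t' ∧ v ∈ D.χ t ∪ D.χ t'
  symm := ⟨by
    rintro u v ⟨hne, t, t', hc, hu, hv⟩
    exact ⟨hne.symm, t, t', hc, hv, hu⟩⟩
  loopless := ⟨fun u h => h.1 rfl⟩

/-- `G` is chordal: every cycle of length at least four has a chord. -/
def IsChordal (G : SimpleGraph V) : Prop :=
  ∀ (v : V) (w : G.Walk v v), w.IsCycle → 4 ≤ w.length →
    ∃ x ∈ w.support, ∃ y ∈ w.support, G.Adj x y ∧ s(x, y) ∉ w.edges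

end Defs

/-!
For `x ∈ K` let `T_x` be the subtree of nodes whose bags contain `x`. Since `K` is a clique, any
two of these subtrees touch, so their closed neighbourhoods `N[T_x]` are pairwise intersecting
subtrees, and by the Helly property of subtrees of a tree they share a node `t₀`. If `t₀` lies in
every `T_x` we are done. Otherwise some `T_u` avoids `t₀` and contains a neighbour `s` of it; for
any other `T_x` avoiding `t₀`, the subtree `T_u ∪ T_x` also avoids `t₀`, and as distinct neighbours
of `t₀` lie in different components of `T - t₀`, the neighbour of `t₀` in `T_x` is `s` as well.
Hence `K ⊆ χ(t₀) ∪ χ(s)`.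
-/
namespace SimpleGraph

variable {ι : Type*} {T : SimpleGraph ι}

def IsPathClosed (T : SimpleGraph ι) (S : Set ι) : Prop :=
  ∀ ⦃u v : ι⦄ (p : T.Walk u v), p.IsPath → u ∈ S → v ∈ S → ∀ x ∈ p.support, x ∈ S

def closedNbhd (T : SimpleGraph ι) (S : Set ι) : Set ι :=
  S ∪ {y | ∃ s ∈ S, T.Adj s y}

lemma IsPathClosed.inter {A B : Set ι} (hA : T.IsPathClosed A) (hB : T.IsPathClosed B) :
    T.IsPathClosed (A ∩ B) :=
  fun _ _ p hp hu hv x hx => ⟨hA p hp hu.1 hv.1 x hx, hB p hp hu.2 hv.2 x hx⟩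

lemma Preconnected.exists_walk_of_induce {S : Set ι} (hS : (T.induce S).Preconnected)
    {u v : ι} (hu : u ∈ S) (hv : v ∈ S) : ∃ p : T.Walk u v, ∀ x ∈ p.support, x ∈ S := by
  obtain ⟨w⟩ := hS ⟨u, hu⟩ ⟨v, hv⟩
  refine ⟨w.map (Embedding.induce S).toHom, fun x hx => ?_⟩
  erw [Walk.support_map, List.mem_map] at hx
  obtain ⟨y, -, rfl⟩ := hx
  exact y.2

lemma IsAcyclic.isPathClosed {S : Set ι} (hT : T.IsAcyclic) (hS : (T.induce S).Preconnected) :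
    T.IsPathClosed S := by
  classical
  intro u v p hp hu hv x hx
  obtain ⟨w, hw⟩ := hS.exists_walk_of_induce hu hv
  have hpw : p = w.bypass :=
    congrArg Subtype.val ((hT.subsingleton_path u v).elim ⟨p, hp⟩ ⟨_, w.bypass_isPath⟩)
  exact hw x (w.support_bypass_subset_support (hpw ▸ hx))

lemma IsAcyclic.mem_support_or_mem_support {u v w : ι} (hT : T.IsAcyclic) {q : T.Walk u v}
    (hq : q.IsPath) (r : T.Walk u w) (s : T.Walk w v) {x : ι} (hx : x ∈ q.support) :
    x ∈ r.support ∨ x ∈ s.support := by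
  classical
  have hq : q = (r.append s).bypass :=
    congrArg Subtype.val
      ((hT.subsingleton_path u v).elim ⟨q, hq⟩ ⟨_, (r.append s).bypass_isPath⟩)
  rw [← Walk.mem_support_append_iff]
  exact Walk.support_bypass_subset_support _ (hq ▸ hx)

lemma IsTree.exists_isPath (hT : T.IsTree) (u v : ι) : ∃ p : T.Walk u v, p.IsPath :=
  (hT.existsUnique_path u v).exists

lemma IsTree.mem_or_mem_of_adj {A C : Set ι} (hT : T.IsTree) (hA : T.IsPathClosed A)
    (hC : T.IsPathClosed C) {z : ι} (hzA : z ∈ A) (hzC : z ∈ C) {v w : ι} (hv : v ∈ A)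
    (hw : w ∈ C) (hvw : T.Adj v w) : v ∈ C ∨ w ∈ A := by
  obtain ⟨p, hp⟩ := hT.exists_isPath z v
  obtain ⟨q, hq⟩ := hT.exists_isPath z w
  by_contra! h
  have hvq : v ∉ q.support := fun hvq => h.1 (hC q hq hzC hw v hvq)
  exact h.2 (hA p hp hzA hv w
    (hT.isAcyclic.mem_support_of_ne_mem_support_of_adj_of_isPath hp hq hvw hvq))

lemma IsTree.inter_inter_nonempty {A B C : Set ι} (hT : T.IsTree) (hA : T.IsPathClosed A)
    (hB : T.IsPathClosed B) (hC : T.IsPathClosed C) (hAB : (A ∩ B).Nonempty)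
    (hBC : (B ∩ C).Nonempty) (hAC : (A ∩ C).Nonempty) : (A ∩ B ∩ C).Nonempty := by
  obtain ⟨x, hxA, hxB⟩ := hAB
  obtain ⟨y, hyB, hyC⟩ := hBC
  obtain ⟨z, hzA, hzC⟩ := hAC
  obtain ⟨q, hq⟩ := hT.exists_isPath x y
  obtain ⟨r, hr⟩ := hT.exists_isPath x z
  obtain ⟨s, hs⟩ := hT.exists_isPath z y
  have hqB : ∀ m ∈ q.support, m ∈ B := hB q hq hxB hyB
  have hqAC : ∀ m ∈ q.support, m ∈ A ∪ C := fun m hm =>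
    (hT.isAcyclic.mem_support_or_mem_support hq r s hm).imp (hA r hr hxA hzA m)
      (hC s hs hzC hyC m)
  suffices ∃ m ∈ q.support, m ∈ A ∧ m ∈ C by
    obtain ⟨m, hm, hmA, hmC⟩ := this
    exact ⟨m, ⟨hmA, hqB m hm⟩, hmC⟩
  by_cases hxC : x ∈ C
  · exact ⟨x, q.start_mem_support, hxA, hxC⟩
  by_cases hyA : y ∈ A
  · exact ⟨y, q.end_mem_support, hyA, hyC⟩
  -- the first step of `q` out of `A \ C` enters `A ∩ C`
  obtain ⟨d, hd, ⟨hdA, hdC⟩, hd'⟩ :=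
    q.exists_boundary_dart (A \ C) ⟨hxA, hxC⟩ (fun h => h.2 hyC)
  have hd'm := q.dart_snd_mem_support_of_mem_darts hd
  have hd'C : d.snd ∈ C := by
    by_contra h
    exact hd' ⟨(hqAC _ hd'm).resolve_right h, h⟩
  refine ⟨d.snd, hd'm, ?_, hd'C⟩
  exact (hT.mem_or_mem_of_adj hA hC hzA hzC hdA hd'C d.adj).resolve_left hdC

theorem IsTree.exists_mem_of_pairwise_inter_nonempty {α : Type*} (hT : T.IsTree) {s : Set α}
    (hs : s.Finite) (f : α → Set ι) (hf : ∀ a ∈ s, T.IsPathClosed (f a))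
    (hpair : ∀ a ∈ s, ∀ b ∈ s, (f a ∩ f b).Nonempty) : ∃ t, ∀ a ∈ s, t ∈ f a := by
  induction s, hs using Set.Finite.induction_on generalizing f with
  | empty => exact ⟨hT.connected.nonempty.some, by simp⟩
  | @insert a s _ _ ih =>
    simp only [Set.mem_insert_iff, forall_eq_or_imp] at hf hpair
    rcases s.eq_empty_or_nonempty with rfl | ⟨b, hb⟩
    · obtain ⟨t, ht⟩ := hpair.1.1
      exact ⟨t, by simpa using ht.1⟩
    -- replace each `f x` by `f x ∩ f a`; these still pairwise intersect by the three-set case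
    obtain ⟨t, ht⟩ := ih (fun x => f x ∩ f a) (fun x hx => (hf.2 x hx).inter hf.1)
      fun x hx y hy => by
        obtain ⟨m, ⟨hmx, hmy⟩, hma⟩ := hT.inter_inter_nonempty (hf.2 x hx) (hf.2 y hy) hf.1
          ((hpair.2 x hx).2 y hy) ((hpair.2 y hy).1) ((hpair.2 x hx).1)
        exact ⟨m, ⟨hmx, hma⟩, hmy, hma⟩
    refine ⟨t, ?_⟩
    simp only [Set.mem_insert_iff, forall_eq_or_imp]
    exact ⟨(ht b hb).2, fun x hx => (ht x hx).1⟩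

lemma Connected.induce_closedNbhd {S : Set ι} (hS : (T.induce S).Connected) :
    (T.induce (T.closedNbhd S)).Connected := by
  obtain ⟨u, hu⟩ := hS.nonempty
  refine induce_connected_of_patches u (Or.inl hu) fun {v} hv => ?_
  rcases hv with hv | ⟨s, hs, hsv⟩
  · exact ⟨S, Set.subset_union_left, hu, hv, hS.preconnected _ _⟩
  · refine ⟨S ∪ {s, v}, ?_, Or.inl hu, Or.inr (by simp), ?_⟩
    · rintro y (hy | rfl | rfl)
      exacts [Or.inl hy, Or.inl hs, Or.inr ⟨s, hs, hsv⟩]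
    · exact (induce_union_connected hS.preconnected
        (induce_pair_connected_of_adj hsv).preconnected ⟨s, hs, by simp⟩).preconnected _ _

lemma IsAcyclic.eq_of_adj_of_adj {S : Set ι} (hT : T.IsAcyclic) (hS : (T.induce S).Preconnected)
    {t s s' : ι} (ht : t ∉ S) (hs : s ∈ S) (hs' : s' ∈ S) (h : T.Adj t s) (h' : T.Adj t s') :
    s = s' := by
  by_contra hne
  obtain ⟨w, hw⟩ := hS.exists_walk_of_induce hs' hs
  -- the walk `t, s', …, s` has to cross the bridge `ts`, and can only do so inside `w`
  have hbridge :=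
    isBridge_iff_forall_walk_mem_edges.mp (isAcyclic_iff_forall_adj_isBridge.mp hT h) (w.cons h')
  rw [Walk.edges_cons, List.mem_cons, Sym2.eq_iff] at hbridge
  have hts : s(t, s) ∈ w.edges :=
    hbridge.resolve_left (by rintro (⟨-, rfl⟩ | ⟨rfl, -⟩) <;> simp_all)
  exact ht (hw t (w.fst_mem_support_of_mem_edges hts))

end SimpleGraph

namespace Touches

variable {ι : Type} {T : SimpleGraph ι} {A B : Set ι}

lemma closedNbhd_inter_nonempty (h : Touches T A B) :
    (T.closedNbhd A ∩ T.closedNbhd B).Nonempty := by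
  rcases h with ⟨x, hxA, hxB⟩ | ⟨a, ha, b, hb, hab⟩
  · exact ⟨x, Or.inl hxA, Or.inl hxB⟩
  · exact ⟨a, Or.inl ha, Or.inr ⟨b, hb, hab.symm⟩⟩

lemma connected_induce_union (h : Touches T A B) (hA : (T.induce A).Preconnected)
    (hB : (T.induce B).Preconnected) : (T.induce (A ∪ B)).Connected := by
  rcases h with hAB | ⟨a, ha, b, hb, hab⟩
  · exact induce_union_connected hA hB hAB
  · exact SimpleGraph.connected_induce_union hA hB ha hb hab

end Touches

namespace LenientTD

variable {V : Type} {G : SimpleGraph V}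

def trace (D : LenientTD G) (x : V) : Set D.ι := {t | x ∈ D.χ t}

lemma touches_trace_of_adj (D : LenientTD G) {x y : V} (hxy : G.Adj x y) :
    Touches D.T (D.trace x) (D.trace y) := by
  obtain ⟨t, t', hc, hx, hy⟩ := D.edge_mem x y hxy
  rcases hx with hx | hx <;> rcases hy with hy | hy
  · exact Or.inl ⟨t, hx, hy⟩
  · rcases hc with rfl | hc
    exacts [Or.inl ⟨t, hx, hy⟩, Or.inr ⟨t, hx, t', hy, hc⟩]
  · rcases hc with rfl | hc
    exacts [Or.inl ⟨t, hx, hy⟩, Or.inr ⟨t', hx, t, hy, hc.symm⟩]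
  · exact Or.inl ⟨t', hx, hy⟩

lemma touches_trace_of_isClique (D : LenientTD G) {K : Set V} (hK : G.IsClique K) {x y : V}
    (hx : x ∈ K) (hy : y ∈ K) : Touches D.T (D.trace x) (D.trace y) := by
  obtain rfl | hxy := eq_or_ne x y
  · obtain ⟨t, ht⟩ := D.covers x
    exact Or.inl ⟨t, ht, ht⟩
  · exact D.touches_trace_of_adj (hK hx hy hxy)

end LenientTD

/-- every clique of `G` is contained in the union of the bags of
two close nodes of any lenient tree decomposition. -/
theorem clique_in_close_bags {V : Type} [Fintype V] (G : SimpleGraph V)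
    (D : LenientTD G) (K : Set V) (hK : G.IsClique K) :
    ∃ t t', (t = t' ∨ D.T.Adj t t') ∧ K ⊆ D.χ t ∪ D.χ t' := by
  obtain ⟨t₀, ht₀⟩ := D.tree.exists_mem_of_pairwise_inter_nonempty K.toFinite
    (fun x => D.T.closedNbhd (D.trace x))
    (fun x _ => D.tree.isAcyclic.isPathClosed (D.trace_conn x).induce_closedNbhd.preconnected)
    (fun x hx y hy => (D.touches_trace_of_isClique hK hx hy).closedNbhd_inter_nonempty)
  by_cases hall : ∀ x ∈ K, t₀ ∈ D.trace x
  · exact ⟨t₀, t₀, Or.inl rfl, fun x hx => Or.inl (hall x hx)⟩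
  push Not at hall
  obtain ⟨u, hu, hu₀⟩ := hall
  obtain ⟨s, hs, hs₀⟩ := (ht₀ u hu).resolve_left hu₀
  refine ⟨t₀, s, Or.inr hs₀.symm, fun x hx => ?_⟩
  by_cases hx₀ : t₀ ∈ D.trace x
  · exact Or.inl hx₀
  obtain ⟨s', hs', hs'₀⟩ := (ht₀ x hx).resolve_left hx₀
  have hss' : s = s' := D.tree.isAcyclic.eq_of_adj_of_adj
    ((D.touches_trace_of_isClique hK hu hx).connected_induce_union (D.trace_conn u).preconnected
      (D.trace_conn x).preconnected).preconnected
    (fun h => h.elim hu₀ hx₀) (Or.inl hs) (Or.inr hs') hs₀.symm hs'₀.symm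
  exact Or.inr (hss' ▸ hs')
end

section
/- Every graph that is minor-minimal with the property sbn(G) > 2 is 2-connected. Equivalently, every graph in the minor-obstruction set of the class of graphs with strict bramble number at most 2 is 2-connected. -/
open SimpleGraph

/-
If `G - v` is disconnected, its vertices split into two nonempty sides `A` and `C` with no edge
between them. A member of a strict bramble avoiding `v` lies inside one side, say `A`; then every
member meets `A`, and tracing the bramble on `A ∪ {v}` gives a strict bramble of the proper induced
subgraph `G[A ∪ {v}]` of at least the same order: two members meeting only in `C` both contain `v`,
since each is connected and also meets `A`. If instead every member contains `v`, the order is at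
most one. So minimality forces `sbn G ≤ 2`. Finally `G` has at least three vertices because
`sbn G` is at most the number of vertices.
-/

section

variable {V : Type} {G : SimpleGraph V}

lemma brOrder_le_ncard {B : Set (Set V)} {X : Set V} (h : Covers X B) :
    brOrder B ≤ X.ncard :=
  Nat.sInf_le ⟨X, h, rfl⟩

lemma IsStrictBramble.nonempty_of_mem {B : Set (Set V)} (hB : IsStrictBramble G B)
    {S : Set V} (hS : S ∈ B) : S.Nonempty := by
  simpa using hB.2 S hS S hS

lemma IsStrictBramble.brOrder_le_card [Finite V] {B : Set (Set V)} (hB : IsStrictBramble G B) :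
    brOrder B ≤ Nat.card V := by
  simpa using brOrder_le_ncard (X := Set.univ) fun S hS => by
    simpa using hB.nonempty_of_mem hS

lemma sbn_le_card [Finite V] (G : SimpleGraph V) : sbn G ≤ Nat.card V :=
  csSup_le' <| by
    rintro n ⟨B, hB, rfl⟩
    exact hB.brOrder_le_card

lemma IsStrictBramble.brOrder_le_sbn [Finite V] {B : Set (Set V)} (hB : IsStrictBramble G B) :
    brOrder B ≤ sbn G :=
  le_csSup ⟨Nat.card V, by rintro n ⟨B, hB, rfl⟩; exact hB.brOrder_le_card⟩ ⟨B, hB, rfl⟩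

lemma sbn_le_of_forall_brOrder_le {k : ℕ}
    (h : ∀ B, IsStrictBramble G B → brOrder B ≤ k) : sbn G ≤ k :=
  csSup_le' <| by
    rintro n ⟨B, hB, rfl⟩
    exact h B hB

lemma SimpleGraph.Connected.induce_preimage_val {U S : Set V} (h : (G.induce (S ∩ U)).Connected) :
    ((G.induce U).induce (Subtype.val ⁻¹' S)).Connected :=
  h.map { toFun := fun x : ↥(S ∩ U) => ⟨⟨x, x.2.2⟩, x.2.1⟩, map_rel' := id }
    fun y => ⟨⟨y, y.2, y.1.2⟩, rfl⟩

lemma brOrder_le_sbn_induce_of_traces [Finite V] (U : Set V) {B : Set (Set V)}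
    (hconn : ∀ S ∈ B, (G.induce (S ∩ U)).Connected)
    (hinter : ∀ S ∈ B, ∀ S' ∈ B, (S ∩ S' ∩ U).Nonempty) :
    brOrder B ≤ sbn (G.induce U) := by
  set B' : Set (Set U) := (Subtype.val ⁻¹' ·) '' B
  have hB' : IsStrictBramble (G.induce U) B' := by
    constructor
    · rintro _ ⟨S, hS, rfl⟩
      exact (hconn S hS).induce_preimage_val
    · rintro _ ⟨S, hS, rfl⟩ _ ⟨S', hS', rfl⟩
      obtain ⟨p, ⟨hpS, hpS'⟩, hpU⟩ := hinter S hS S' hS'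
      exact ⟨⟨p, hpU⟩, hpS, hpS'⟩
  obtain ⟨X, hX, hXcard⟩ := Nat.sInf_mem (s := {n | ∃ X : Set U, Covers X B' ∧ X.ncard = n})
    ⟨_, Set.univ, fun T hT => by simpa using hB'.nonempty_of_mem hT, rfl⟩
  have hcov : Covers (Subtype.val '' X) B := by
    intro S hS
    obtain ⟨u, huS, huX⟩ := hX _ ⟨S, hS, rfl⟩
    exact ⟨u, huS, u, huX, rfl⟩
  calc brOrder B ≤ (Subtype.val '' X).ncard := brOrder_le_ncard hcov
    _ = brOrder B' := by rw [Set.ncard_image_of_injective X Subtype.val_injective, hXcard]; rfl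
    _ ≤ sbn (G.induce U) := hB'.brOrder_le_sbn

lemma SimpleGraph.Reachable.map_of_adj_reachable {W : Type} {H : SimpleGraph W} (f : V → W)
    (hf : ∀ x y, G.Adj x y → H.Reachable (f x) (f y)) {x y : V} (h : G.Reachable x y) :
    H.Reachable (f x) (f y) := by
  rw [reachable_iff_reflTransGen] at h ⊢
  exact Relation.ReflTransGen.lift' f
    (fun a b hab => (reachable_iff_reflTransGen _ _).1 (hf a b hab)) _ _ h

/-- For `v ∉ A`: `A` is a union of components of `G - v`. -/
def IsSideAt (G : SimpleGraph V) (v : V) (A : Set V) : Prop :=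
  ∀ x ∈ A, ∀ y, G.Adj x y → y ≠ v → y ∈ A

namespace IsSideAt

variable {v : V} {A S : Set V}

lemma compl (hA : IsSideAt G v A) : IsSideAt G v {x | x ≠ v ∧ x ∉ A} :=
  fun x ⟨hxv, hxA⟩ y hxy hyv => ⟨hyv, fun hyA => hxA (hA y hyA x hxy.symm hxv)⟩

lemma mem_of_connected (hA : IsSideAt G v A) (hS : (G.induce S).Connected)
    (hSA : (S ∩ A).Nonempty) {y : V} (hyS : y ∈ S) (hyA : y ∉ A) : v ∈ S := by
  obtain ⟨x, hxS, hxA⟩ := hSA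
  obtain ⟨w⟩ := hS.preconnected ⟨x, hxS⟩ ⟨y, hyS⟩
  obtain ⟨d, -, hdA, hdA'⟩ := w.exists_boundary_dart {p | p.1 ∈ A} hxA hyA
  have hdv : d.snd.1 = v := by
    by_contra hne
    exact hdA' (hA _ hdA _ d.adj hne)
  exact hdv ▸ d.snd.2

lemma subset_or_subset_compl (hA : IsSideAt G v A) (hS : (G.induce S).Connected) (hvS : v ∉ S) :
    S ⊆ A ∨ S ⊆ {x | x ≠ v ∧ x ∉ A} := by
  by_cases hSA : (S ∩ A).Nonempty
  · exact .inl fun y hyS => by_contra fun hyA => hvS (hA.mem_of_connected hS hSA hyS hyA)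
  · exact .inr fun y hyS => ⟨fun h => hvS (h ▸ hyS), fun hyA => hSA ⟨y, hyS, hyA⟩⟩

/-- The trace is connected because collapsing everything outside `A ∪ {v}` onto `v` maps walks in
`G[S]` to walks in the trace. -/
lemma connected_induce_inter (hA : IsSideAt G v A) (hS : (G.induce S).Connected)
    (hSA : (S ∩ A).Nonempty) : (G.induce (S ∩ insert v A)).Connected := by
  classical
  let r : S → ↥(S ∩ insert v A) := fun x =>
    if hx : x.1 ∈ insert v A then ⟨x, x.2, hx⟩
    else ⟨v, hA.mem_of_connected hS hSA x.2 fun h => hx (.inr h), .inl rfl⟩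
  have hr_mem : ∀ x (hx : x.1 ∈ insert v A), r x = ⟨x, x.2, hx⟩ := fun x hx => dif_pos hx
  have hr_not_mem : ∀ x, x.1 ∉ insert v A → (r x : V) = v := fun x hx => by
    simp only [r, dif_neg hx]
  have hr_of_adj : ∀ {x y : S}, G.Adj x y → y.1 ∉ insert v A → (r x : V) = v := by
    intro x y hxy hy
    by_cases hx : x.1 ∈ insert v A
    · rw [hr_mem x hx]
      exact hx.resolve_right fun hxA => hy (.inr (hA _ hxA _ hxy fun hyv => hy (.inl hyv)))
    · exact hr_not_mem x hx
  have hr : ∀ x y, (G.induce S).Adj x y → (G.induce (S ∩ insert v A)).Reachable (r x) (r y) := by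
    intro x y hxy
    by_cases hy : y.1 ∈ insert v A
    · by_cases hx : x.1 ∈ insert v A
      · rw [hr_mem x hx, hr_mem y hy]
        exact Adj.reachable hxy
      · rw [Subtype.ext ((hr_not_mem x hx).trans (hr_of_adj hxy.symm hx).symm)]
    · rw [Subtype.ext ((hr_of_adj hxy hy).trans (hr_not_mem y hy).symm)]
  obtain ⟨a, haS, haA⟩ := hSA
  have : Nonempty ↥(S ∩ insert v A) := ⟨⟨a, haS, .inr haA⟩⟩
  refine ⟨fun p q => ?_⟩
  simpa only [hr_mem ⟨p, p.2.1⟩ p.2.2, hr_mem ⟨q, q.2.1⟩ q.2.2] using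
    (hS.preconnected ⟨p, p.2.1⟩ ⟨q, q.2.1⟩).map_of_adj_reachable r hr

lemma brOrder_le_sbn_induce [Finite V] (hA : IsSideAt G v A) {B : Set (Set V)}
    (hB : IsStrictBramble G B) {S₀ : Set V} (hS₀ : S₀ ∈ B) (hsub : S₀ ⊆ A) :
    brOrder B ≤ sbn (G.induce (insert v A)) := by
  have hmeet : ∀ S ∈ B, (S ∩ A).Nonempty := fun S hS =>
    (hB.2 S hS S₀ hS₀).mono (Set.inter_subset_inter_right _ hsub)
  refine brOrder_le_sbn_induce_of_traces _
    (fun S hS => hA.connected_induce_inter (hB.1 S hS) (hmeet S hS)) fun S hS S' hS' => ?_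
  obtain ⟨p, hpS, hpS'⟩ := hB.2 S hS S' hS'
  by_cases hp : p ∈ insert v A
  · exact ⟨p, ⟨hpS, hpS'⟩, hp⟩
  · have hpA : p ∉ A := fun h => hp (.inr h)
    exact ⟨v, ⟨hA.mem_of_connected (hB.1 S hS) (hmeet S hS) hpS hpA,
      hA.mem_of_connected (hB.1 S' hS') (hmeet S' hS') hpS' hpA⟩, .inl rfl⟩

end IsSideAt

lemma exists_isSideAt_of_not_connected {v : V} (hne : ∃ u, u ≠ v)
    (h : ¬(G.induce {v}ᶜ).Connected) :
    ∃ A : Set V, IsSideAt G v A ∧ (∃ a ∈ A, a ≠ v) ∧ ∃ b ∉ A, b ≠ v := by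
  obtain ⟨u, hu⟩ := hne
  have : Nonempty ↥({v}ᶜ : Set V) := ⟨⟨u, hu⟩⟩
  obtain ⟨a, b, hab⟩ : ∃ a b, ¬(G.induce {v}ᶜ).Reachable a b := by
    by_contra! hall
    exact h ⟨hall⟩
  refine ⟨Subtype.val '' {x | (G.induce {v}ᶜ).Reachable a x}, ?_, ⟨a, ⟨a, .refl _, rfl⟩, a.2⟩,
    b, ?_, b.2⟩
  · rintro _ ⟨x, hx, rfl⟩ y hxy hyv
    exact ⟨⟨y, hyv⟩, hx.trans (Adj.reachable (G := G.induce {v}ᶜ) hxy), rfl⟩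
  · rintro ⟨b', hb', hb'b⟩
    exact hab (Subtype.ext hb'b ▸ hb')

lemma brOrder_le_one_of_forall_mem {B : Set (Set V)} {v : V} (h : ∀ S ∈ B, v ∈ S) :
    brOrder B ≤ 1 := by
  simpa using brOrder_le_ncard (X := {v}) fun S hS => ⟨v, h S hS, rfl⟩

lemma isMinorOf_induce (G : SimpleGraph V) (U : Set V) : IsMinorOf (G.induce U) G := by
  refine ⟨fun w => {w.1}, fun w => ?_, fun w w' hne => ?_,
    fun w w' hadj => ⟨w, rfl, w', rfl, hadj⟩⟩
  · rw [induce_singleton_eq_top]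
    exact connected_top
  · exact Set.singleton_inter_eq_empty.mpr (Subtype.val_injective.ne hne)

lemma sbn_induce_le_of_minimal [Fintype V] {k : ℕ}
    (hmin : ∀ (W : Type) [Fintype W] (H : SimpleGraph W),
      IsMinorOf H G → k < sbn H → Nonempty (H ≃g G))
    {U : Set V} (hU : U ≠ Set.univ) : sbn (G.induce U) ≤ k := by
  classical
  by_contra! hlt
  obtain ⟨e⟩ := hmin U (G.induce U) (isMinorOf_induce G U) hlt
  have hcard : Nat.card U = Nat.card V := Nat.card_congr e.toEquiv
  rw [Nat.card_coe_set_eq, ← Set.ncard_univ] at hcard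
  exact hU (Set.eq_of_subset_of_ncard_le (Set.subset_univ U) hcard.ge)

end

/-- every minor-minimal graph with `sbn > 2` is 2-connected:
it has at least three vertices and stays connected after deleting any vertex. -/
theorem obstruction_sbn_two_isTwoConnected {V : Type} [Fintype V]
    (G : SimpleGraph V) (h1 : 2 < sbn G)
    (h2 : ∀ (W : Type) [Fintype W] (H : SimpleGraph W),
      IsMinorOf H G → 2 < sbn H → Nonempty (H ≃g G)) :
    3 ≤ Fintype.card V ∧ ∀ v : V, (G.induce ({v}ᶜ : Set V)).Connected := by
  have hcard : 3 ≤ Fintype.card V := by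
    have := sbn_le_card G
    rw [Nat.card_eq_fintype_card] at this
    omega
  refine ⟨hcard, fun v => by_contra fun hconn => ?_⟩
  obtain ⟨A, hA, ⟨a, haA, hav⟩, b, hbA, hbv⟩ :=
    exists_isSideAt_of_not_connected (Fintype.exists_ne_of_one_lt_card (by omega) v) hconn
  refine h1.not_ge (sbn_le_of_forall_brOrder_le fun B hB => ?_)
  by_cases hv : ∀ S ∈ B, v ∈ S
  · exact (brOrder_le_one_of_forall_mem hv).trans one_le_two
  push Not at hv
  obtain ⟨S₀, hS₀, hvS₀⟩ := hv
  rcases hA.subset_or_subset_compl (hB.1 S₀ hS₀) hvS₀ with hsub | hsub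
  · refine (hA.brOrder_le_sbn_induce hB hS₀ hsub).trans (sbn_induce_le_of_minimal h2 ?_)
    exact fun h => (h ▸ Set.mem_univ b : b ∈ insert v A).elim hbv hbA
  · refine (hA.compl.brOrder_le_sbn_induce hB hS₀ hsub).trans (sbn_induce_le_of_minimal h2 ?_)
    exact fun h => (h ▸ Set.mem_univ a : a ∈ insert v {x | x ≠ v ∧ x ∉ A}).elim hav
      fun haC => haC.2 haA
end
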